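/- arXiv:2012.02843 — 2 statements merged into one kernel-verified Lean document; each statement's English description precedes it below -/
import Mathlib

section
/- Let d ≥ 1, let 0 < 2δ < λ, let λ/(2(λ−δ)) < ε < 1, and set r := (2(λ−δ)ε − λ)/(λ − 2δε), so that 0 < r < 1. Let s < τ < t be real numbers with (t−s)ε < τ − s < t − s. Set c₊ := ε^{-d/2} (λ/(2δ))^{d/2} r^{-d/2}. Then for all x, y, z ∈ ℝ^d: k_λ(t−τ, x−z) · k_{2δ}(τ−s, y−z)² ≤ c₊² · k_{λ/r}(t−τ, x−z) · k_λ(t−s, x−y)². -/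
open MeasureTheory ENNReal

noncomputable section

/-- `ℝ^d` as a Euclidean space. -/
abbrev E (d : ℕ) := EuclideanSpace ℝ (Fin d)

/-- The Gaussian kernel `k_μ(t,x) = (4πμt)^{-d/2} exp(-|x|²/(4μt))`. -/
def gaussK (d : ℕ) (μ t : ℝ) (x : E d) : ℝ :=
  (4 * Real.pi * μ * t) ^ (-(d : ℝ) / 2) * Real.exp (-‖x‖ ^ 2 / (4 * μ * t))

/-- The heat semigroup `e^{tΔ}` applied to a nonnegative (extended-real valued)
function `g`, with values in `[0,∞]`. -/
def heatSem (d : ℕ) (t : ℝ) (g : E d → ℝ≥0∞) (x : E d) : ℝ≥0∞ :=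
  ∫⁻ y, ENNReal.ofReal (gaussK d 1 t (x - y)) * g y

/-- `|b|²` as an `ℝ≥0∞`-valued function. -/
def bsq (d : ℕ) (b : E d → E d) : E d → ℝ≥0∞ := fun y => ENNReal.ofReal (‖b y‖ ^ 2)

/-- The elliptic Nash norm `n_e(b,h)`. -/
def nashNorm (d : ℕ) (b : E d → E d) (h : ℝ) : ℝ≥0∞ :=
  ⨆ x : E d, ∫⁻ t in Set.Ioc (0 : ℝ) h,
    (heatSem d t (bsq d b) x) ^ (1 / 2 : ℝ) * ENNReal.ofReal (t ^ (-(1 : ℝ) / 2))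

/-!
The prefactors and the Gaussian exponents are compared separately. For the exponents, the
triangle inequality through `z` and the two-term Cauchy–Schwarz bound
`(p + q)² / (A + B) ≤ p² / A + q² / B` give
`|x-y|² / (A + B) ≤ |x-z|² / A + |y-z|² / B` with `A = 4λ(t-τ)/(1-r)` and `B = 4δ(τ-s)`;
the choice of `r` makes `A + B ≤ 2λ(t-s)` equivalent to `(t-s)ε ≤ τ-s`. The prefactors
reduce to `r ε² (t-s)² ≤ (τ-s)²`.
-/

theorem add_sq_div_add_le {p q A B : ℝ} (hA : 0 < A) (hB : 0 < B) :
    (p + q) ^ 2 / (A + B) ≤ p ^ 2 / A + q ^ 2 / B := by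
  rw [div_add_div _ _ hA.ne' hB.ne', div_le_div_iff₀ (by positivity) (by positivity)]
  nlinarith [sq_nonneg (p * B - q * A)]

theorem norm_sub_sq_div_add_le {F : Type*} [SeminormedAddCommGroup F] (x y z : F)
    {A B : ℝ} (hA : 0 < A) (hB : 0 < B) :
    ‖x - y‖ ^ 2 / (A + B) ≤ ‖x - z‖ ^ 2 / A + ‖y - z‖ ^ 2 / B := calc
  ‖x - y‖ ^ 2 / (A + B) ≤ (‖x - z‖ + ‖y - z‖) ^ 2 / (A + B) := by
    gcongr
    simpa using norm_sub_le (x - z) (y - z)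
  _ ≤ _ := add_sq_div_add_le hA hB

theorem gaussK_eq {d : ℕ} {μ t : ℝ} (hμ : 0 < μ) (ht : 0 < t) (x : E d) :
    gaussK d μ t x = ((4 * Real.pi * μ * t)⁻¹) ^ ((d : ℝ) / 2)
      * Real.exp (-(‖x‖ ^ 2 / (4 * μ * t))) := by
  rw [gaussK, neg_div, Real.rpow_neg (by positivity), Real.inv_rpow (by positivity), neg_div]

theorem gaussK_mul_sq_le {d : ℕ} {μ₁ t₁ μ₂ t₂ μ₃ t₃ μ₄ t₄ C : ℝ}
    (hμ₁ : 0 < μ₁) (ht₁ : 0 < t₁) (hμ₂ : 0 < μ₂) (ht₂ : 0 < t₂)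
    (hμ₃ : 0 < μ₃) (ht₃ : 0 < t₃) (hμ₄ : 0 < μ₄) (ht₄ : 0 < t₄) (hC : 0 ≤ C)
    {x y u v : E d}
    (hpre : (4 * Real.pi * μ₁ * t₁)⁻¹ * ((4 * Real.pi * μ₂ * t₂)⁻¹) ^ 2
      ≤ C ^ 2 * (4 * Real.pi * μ₃ * t₃)⁻¹ * ((4 * Real.pi * μ₄ * t₄)⁻¹) ^ 2)
    (hexp : ‖u‖ ^ 2 / (4 * μ₃ * t₃) + 2 * (‖v‖ ^ 2 / (4 * μ₄ * t₄))
      ≤ ‖x‖ ^ 2 / (4 * μ₁ * t₁) + 2 * (‖y‖ ^ 2 / (4 * μ₂ * t₂))) :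
    gaussK d μ₁ t₁ x * gaussK d μ₂ t₂ y ^ 2
      ≤ (C ^ ((d : ℝ) / 2)) ^ 2 * gaussK d μ₃ t₃ u * gaussK d μ₄ t₄ v ^ 2 := by
  set P₁ := (4 * Real.pi * μ₁ * t₁)⁻¹
  set P₂ := (4 * Real.pi * μ₂ * t₂)⁻¹
  set P₃ := (4 * Real.pi * μ₃ * t₃)⁻¹
  set P₄ := (4 * Real.pi * μ₄ * t₄)⁻¹
  have hP₁ : 0 ≤ P₁ := by positivity
  have hP₂ : 0 ≤ P₂ := by positivity
  have hP₃ : 0 ≤ P₃ := by positivity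
  have hP₄ : 0 ≤ P₄ := by positivity
  have hsq : ∀ {a : ℝ}, 0 ≤ a → (a ^ ((d : ℝ) / 2)) ^ 2 = (a ^ 2) ^ ((d : ℝ) / 2) := fun ha => by
    rw [sq, sq, Real.mul_rpow ha ha]
  have hexp_sq : ∀ a : ℝ, Real.exp a ^ 2 = Real.exp (2 * a) := fun a => by
    rw [sq, ← Real.exp_add, two_mul]
  rw [gaussK_eq hμ₁ ht₁, gaussK_eq hμ₂ ht₂, gaussK_eq hμ₃ ht₃, gaussK_eq hμ₄ ht₄]
  calc _ = (P₁ * P₂ ^ 2) ^ ((d : ℝ) / 2)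
        * Real.exp (-(‖x‖ ^ 2 / (4 * μ₁ * t₁)) + 2 * -(‖y‖ ^ 2 / (4 * μ₂ * t₂))) := by
        rw [Real.mul_rpow hP₁ (by positivity), Real.exp_add, mul_pow, hsq hP₂, hexp_sq]; ring
    _ ≤ (C ^ 2 * P₃ * P₄ ^ 2) ^ ((d : ℝ) / 2)
        * Real.exp (-(‖u‖ ^ 2 / (4 * μ₃ * t₃)) + 2 * -(‖v‖ ^ 2 / (4 * μ₄ * t₄))) :=
        mul_le_mul (Real.rpow_le_rpow (by positivity) hpre (by positivity))
          (Real.exp_le_exp.2 (by linarith)) (by positivity) (by positivity)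
    _ = _ := by
        rw [Real.mul_rpow (by positivity) (by positivity), Real.mul_rpow (by positivity) hP₃,
          Real.exp_add, mul_pow, hsq hP₄, hsq hC, hexp_sq]; ring

section Parameters

variable {δ lam ε r : ℝ}

theorem sub_two_mul_mul_pos (hδ : 0 < δ) (hdl : 2 * δ < lam) (hε1 : ε < 1) :
    0 < lam - 2 * δ * ε := by
  nlinarith

theorem ratio_mem_Ioo (hδ : 0 < δ) (hdl : 2 * δ < lam) (hε0 : lam / (2 * (lam - δ)) < ε)
    (hε1 : ε < 1) (hr : r = (2 * (lam - δ) * ε - lam) / (lam - 2 * δ * ε)) :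
    0 < r ∧ r < 1 := by
  have hden := sub_two_mul_mul_pos hδ hdl hε1
  have hnum : 0 < 2 * (lam - δ) * ε - lam := by
    have := (div_lt_iff₀ (by linarith : (0 : ℝ) < 2 * (lam - δ))).1 hε0
    linarith
  rw [hr, div_lt_one hden]
  exact ⟨div_pos hnum hden, by nlinarith⟩

theorem one_sub_ratio (hδ : 0 < δ) (hdl : 2 * δ < lam) (hε1 : ε < 1)
    (hr : r = (2 * (lam - δ) * ε - lam) / (lam - 2 * δ * ε)) :
    1 - r = 2 * lam * (1 - ε) / (lam - 2 * δ * ε) := by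
  have hden := sub_two_mul_mul_pos hδ hdl hε1
  rw [hr]
  field_simp
  ring

theorem variance_add_le (hδ : 0 < δ) (hdl : 2 * δ < lam) (hε1 : ε < 1)
    (hr : r = (2 * (lam - δ) * ε - lam) / (lam - 2 * δ * ε)) {s τ t : ℝ}
    (hτs : (t - s) * ε ≤ τ - s) :
    4 * lam * (t - τ) / (1 - r) + 4 * δ * (τ - s) ≤ 2 * lam * (t - s) := by
  have hden := sub_two_mul_mul_pos hδ hdl hε1
  have hlam : 0 < lam := by linarith
  have h1ε : 0 < 1 - ε := by linarith
  rw [one_sub_ratio hδ hdl hε1 hr, ← sub_nonneg]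
  have key : 2 * lam * (t - s) - (4 * lam * (t - τ) / (2 * lam * (1 - ε) / (lam - 2 * δ * ε))
      + 4 * δ * (τ - s)) = 2 * (lam - 2 * δ) * ((τ - s) - (t - s) * ε) / (1 - ε) := by
    field_simp
    ring
  rw [key]
  apply div_nonneg _ h1ε.le
  apply mul_nonneg (by linarith) (by linarith)

theorem exponent_le (hδ : 0 < δ) (hdl : 2 * δ < lam) (hε1 : ε < 1)
    (hr : r = (2 * (lam - δ) * ε - lam) / (lam - 2 * δ * ε)) (hr0 : 0 < r) (hr1 : r < 1)
    {s τ t : ℝ} (hsτ : s < τ) (hτt : τ < t) (hτs : (t - s) * ε ≤ τ - s)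
    {F : Type*} [SeminormedAddCommGroup F] (x y z : F) :
    ‖x - z‖ ^ 2 / (4 * (lam / r) * (t - τ)) + 2 * (‖x - y‖ ^ 2 / (4 * lam * (t - s)))
      ≤ ‖x - z‖ ^ 2 / (4 * lam * (t - τ)) + 2 * (‖y - z‖ ^ 2 / (4 * (2 * δ) * (τ - s))) := by
  have hlam : 0 < lam := by linarith
  have h1r : 0 < 1 - r := by linarith
  have hA : 0 < 4 * lam * (t - τ) / (1 - r) := div_pos (by nlinarith) h1r
  have hB : 0 < 4 * δ * (τ - s) := by nlinarith
  have hsplit := norm_sub_sq_div_add_le x y z hA hB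
  have hvar : ‖x - y‖ ^ 2 / (2 * lam * (t - s)) ≤ ‖x - y‖ ^ 2 / (4 * lam * (t - τ) / (1 - r)
      + 4 * δ * (τ - s)) :=
    div_le_div_of_nonneg_left (sq_nonneg _) (by positivity) (variance_add_le hδ hdl hε1 hr hτs)
  have e₁ : ‖x - z‖ ^ 2 / (4 * (lam / r) * (t - τ)) = r * (‖x - z‖ ^ 2 / (4 * lam * (t - τ))) := by
    field_simp
  have e₂ : ‖x - z‖ ^ 2 / (4 * lam * (t - τ) / (1 - r))
      = (1 - r) * (‖x - z‖ ^ 2 / (4 * lam * (t - τ))) := by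
    field_simp
  have e₃ : 2 * (‖x - y‖ ^ 2 / (4 * lam * (t - s))) = ‖x - y‖ ^ 2 / (2 * lam * (t - s)) := by
    field_simp
    ring
  have e₄ : 2 * (‖y - z‖ ^ 2 / (4 * (2 * δ) * (τ - s))) = ‖y - z‖ ^ 2 / (4 * δ * (τ - s)) := by
    field_simp
  rw [e₁, e₃, e₄]
  linarith

theorem prefactor_le (hδ : 0 < δ) (hlam : 0 < lam) (hε : 0 < ε) (hr0 : 0 < r) (hr1 : r ≤ 1)
    {s τ t : ℝ} (hsτ : s < τ) (hτt : τ < t) (hτs : (t - s) * ε ≤ τ - s) :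
    (4 * Real.pi * lam * (t - τ))⁻¹ * ((4 * Real.pi * (2 * δ) * (τ - s))⁻¹) ^ 2
      ≤ (ε⁻¹ * (lam / (2 * δ)) * r⁻¹) ^ 2 * (4 * Real.pi * (lam / r) * (t - τ))⁻¹
        * ((4 * Real.pi * lam * (t - s))⁻¹) ^ 2 := by
  have hts : 0 < t - s := by linarith
  have hτs' : 0 < τ - s := by linarith
  have hkey : r * (ε * (t - s)) ^ 2 ≤ (τ - s) ^ 2 := calc
    r * (ε * (t - s)) ^ 2 ≤ (ε * (t - s)) ^ 2 := mul_le_of_le_one_left (sq_nonneg _) hr1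
    _ ≤ (τ - s) ^ 2 := by gcongr; linarith
  have hfac : (ε⁻¹ * (lam / (2 * δ)) * r⁻¹) ^ 2 * (4 * Real.pi * (lam / r) * (t - τ))⁻¹
        * ((4 * Real.pi * lam * (t - s))⁻¹) ^ 2
      = (4 * Real.pi * lam * (t - τ))⁻¹ * ((4 * Real.pi * (2 * δ) * (τ - s))⁻¹) ^ 2
        * ((τ - s) ^ 2 / (r * (ε * (t - s)) ^ 2)) := by
    have : t - τ ≠ 0 := by linarith
    field_simp
  rw [hfac]
  exact le_mul_of_one_le_right (by positivity) ((one_le_div (by positivity)).2 hkey)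

end Parameters

theorem gauss_a4_plus_general (d : ℕ) (δ lam ε s τ t r : ℝ)
    (hδ : 0 < 2 * δ) (hdl : 2 * δ < lam)
    (hε0 : lam / (2 * (lam - δ)) < ε) (hε1 : ε < 1)
    (hr : r = (2 * (lam - δ) * ε - lam) / (lam - 2 * δ * ε))
    (hsτ : s < τ) (hτt : τ < t) (hτs : (t - s) * ε < τ - s) (x y z : E d) :
    (0 < r ∧ r < 1) ∧
    gaussK d lam (t - τ) (x - z) * gaussK d (2 * δ) (τ - s) (y - z) ^ 2
      ≤ (ε ^ (-(d : ℝ) / 2) * (lam / (2 * δ)) ^ ((d : ℝ) / 2) * r ^ (-(d : ℝ) / 2)) ^ 2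
        * gaussK d (lam / r) (t - τ) (x - z)
        * gaussK d lam (t - s) (x - y) ^ 2 := by
  have hδ₀ : 0 < δ := by linarith
  have hlam : 0 < lam := by linarith
  have hε : 0 < ε := lt_trans (div_pos hlam (by linarith)) hε0
  obtain ⟨hr0, hr1⟩ := ratio_mem_Ioo hδ₀ hdl hε0 hε1 hr
  refine ⟨⟨hr0, hr1⟩, ?_⟩
  have hconst : ε ^ (-(d : ℝ) / 2) * (lam / (2 * δ)) ^ ((d : ℝ) / 2) * r ^ (-(d : ℝ) / 2)
      = (ε⁻¹ * (lam / (2 * δ)) * r⁻¹) ^ ((d : ℝ) / 2) := by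
    rw [neg_div, Real.rpow_neg hε.le, Real.rpow_neg hr0.le, ← Real.inv_rpow hε.le,
      ← Real.inv_rpow hr0.le, Real.mul_rpow (by positivity) (by positivity),
      Real.mul_rpow (by positivity) (by positivity)]
  rw [hconst]
  exact gaussK_mul_sq_le hlam (by linarith) hδ (by linarith) (div_pos hlam hr0) (by linarith)
    hlam (by linarith) (by positivity)
    (prefactor_le hδ₀ hlam hε hr0 hr1.le hsτ hτt hτs.le)
    (exponent_le hδ₀ hdl hε1 hr hr0 hr1 hsτ hτt hτs.le x y z)

/-- (`a₄⁺`) For `0 < 2δ < λ`, `λ/(2(λ−δ)) < ε < 1`,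
`r = (2(λ−δ)ε − λ)/(λ − 2δε)` (so `0 < r < 1`), `s < τ < t` with `(t−s)ε < τ − s`, and
`c₊ = ε^{-d/2}(λ/(2δ))^{d/2} r^{-d/2}`:
`k_λ(t−τ,x−z) k_{2δ}(τ−s,y−z)² ≤ c₊² k_{λ/r}(t−τ,x−z) k_λ(t−s,x−y)²`. -/
theorem gauss_a4_plus (d : ℕ) (hd : 1 ≤ d) (δ lam ε s τ t r : ℝ)
    (hδ : 0 < 2 * δ) (hdl : 2 * δ < lam)
    (hε0 : lam / (2 * (lam - δ)) < ε) (hε1 : ε < 1)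
    (hr : r = (2 * (lam - δ) * ε - lam) / (lam - 2 * δ * ε))
    (hsτ : s < τ) (hτt : τ < t) (hτs : (t - s) * ε < τ - s) (x y z : E d) :
    (0 < r ∧ r < 1) ∧
    gaussK d lam (t - τ) (x - z) * gaussK d (2 * δ) (τ - s) (y - z) ^ 2
      ≤ (ε ^ (-(d : ℝ) / 2) * (lam / (2 * δ)) ^ ((d : ℝ) / 2) * r ^ (-(d : ℝ) / 2)) ^ 2
        * gaussK d (lam / r) (t - τ) (x - z)
        * gaussK d lam (t - s) (x - y) ^ 2 :=
  gauss_a4_plus_general d δ lam ε s τ t r hδ hdl hε0 hε1 hr hsτ hτt hτs x y z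
end
end

section
/- Let d ≥ 1 and let b : ℝ^d → ℝ^d be a measurable vector field with |b| ∈ L²_loc such that: (i) there are constants β > 0 and c ≥ 0 with ∫_{ℝ^d} |b|² f² dx ≤ β ∫_{ℝ^d} |∇f|² dx + c ∫_{ℝ^d} f² dx for every f ∈ W^{1,2}(ℝ^d), and (ii) n_e(b,h) < ∞ for some h > 0. Then κ_d(b,h) ≤ sqrt(βd/8 + c·h) · n_e(b,h) < ∞; in particular b belongs to the Kato class K^d. -/
open MeasureTheory ENNReal

noncomputable section

/-- The Kato norm of order `d`, `κ_d(b,h)`. -/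
def katoNormD (d : ℕ) (b : E d → E d) (h : ℝ) : ℝ≥0∞ :=
  ⨆ x : E d, ∫⁻ t in Set.Ioc (0 : ℝ) h, heatSem d t (bsq d b) x

/-!
Test the form bound with `f = √(k_t(x - ·))`, the square root of the heat kernel, so that
`∫ |b|² f² = e^{tΔ}|b|²(x)` and `∫ f² = 1`. The Gaussian second moment
`∫ ‖v‖² e^{-s‖v‖²} = (d / 2s) ∫ e^{-s‖v‖²}` (a ratio of Gamma values after passing to polar
coordinates) gives `∫ |∇f|² = d / 8t`, hence `e^{tΔ}|b|²(x) ≤ βd/8t + c ≤ M / t` for `t ≤ h`,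
with `M = βd/8 + ch`. Then `e^{tΔ}|b|²(x) ≤ √M · t^{-1/2} √(e^{tΔ}|b|²(x))`, and integrating
over `t ∈ (0, h]` bounds `κ_d(b, h)` by `√M · n_e(b, h)`.
-/

open Real Set Module

theorem integral_Ioi_rpow_mul_sq_mul_exp_neg_mul_sq {s q : ℝ} (hs : 0 < s) (hq : -1 < q) :
    ∫ y in Ioi (0 : ℝ), y ^ q * (y ^ 2 * exp (-s * y ^ 2))
      = (q + 1) / (2 * s) * ∫ y in Ioi (0 : ℝ), y ^ q * exp (-s * y ^ 2) := by
  simp_rw [← Real.rpow_two]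
  rw [setIntegral_congr_fun measurableSet_Ioi fun y (hy : 0 < y) => by
      rw [← mul_assoc, ← Real.rpow_add hy],
    integral_rpow_mul_exp_neg_mul_rpow two_pos (by linarith) hs,
    integral_rpow_mul_exp_neg_mul_rpow two_pos hq hs,
    show (q + 2 + 1) / 2 = (q + 1) / 2 + 1 by ring, Gamma_add_one (by linarith),
    show -(q + 2 + 1) / 2 = -(q + 1) / 2 + -1 by ring, Real.rpow_add hs, Real.rpow_neg_one]
  ring

section GaussianMoments

variable {V : Type*} [NormedAddCommGroup V] [NormedSpace ℝ V] [FiniteDimensional ℝ V]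
  [MeasurableSpace V] [BorelSpace V] (μ : Measure V) [μ.IsAddHaarMeasure] {s : ℝ}

theorem integrable_norm_pow_mul_exp_neg_mul_norm_sq (hs : 0 < s) (k : ℕ) :
    Integrable (fun v => ‖v‖ ^ k * exp (-s * ‖v‖ ^ 2)) μ := by
  obtain hV | hV := subsingleton_or_nontrivial V
  · exact (integrable_const (‖(0 : V)‖ ^ k * exp (-s * ‖(0 : V)‖ ^ 2))).congr
      (ae_of_all _ fun v => by rw [Subsingleton.elim v 0])
  · rw [integrable_fun_norm_addHaar μ (f := fun r => r ^ k * exp (-s * r ^ 2))]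
    refine (integrableOn_rpow_mul_exp_neg_mul_sq hs (s := (finrank ℝ V - 1 + k : ℕ))
      (neg_one_lt_zero.trans_le (Nat.cast_nonneg _))).congr_fun (fun y _ => ?_) measurableSet_Ioi
    dsimp only
    rw [Real.rpow_natCast, pow_add, smul_eq_mul, mul_assoc]

theorem integral_norm_sq_mul_exp_neg_mul_norm_sq (hs : 0 < s) :
    ∫ v, ‖v‖ ^ 2 * exp (-s * ‖v‖ ^ 2) ∂μ
      = finrank ℝ V / (2 * s) * ∫ v, exp (-s * ‖v‖ ^ 2) ∂μ := by
  obtain hV | hV := subsingleton_or_nontrivial V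
  · simp [finrank_zero_of_subsingleton, Subsingleton.elim _ (0 : V)]
  · have hradial := integral_Ioi_rpow_mul_sq_mul_exp_neg_mul_sq hs
      (q := (finrank ℝ V - 1 : ℕ)) (neg_one_lt_zero.trans_le (Nat.cast_nonneg _))
    simp only [Real.rpow_natCast] at hradial
    rw [Nat.cast_sub finrank_pos, Nat.cast_one, sub_add_cancel] at hradial
    rw [integral_fun_norm_addHaar μ (fun r => r ^ 2 * exp (-s * r ^ 2)),
      integral_fun_norm_addHaar μ (fun r => exp (-s * r ^ 2))]
    simp only [smul_eq_mul]
    rw [hradial]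
    ring

theorem sq_const_mul_exp_neg_mul_sq (C a r : ℝ) :
    (C * exp (-a * r ^ 2)) ^ 2 = C ^ 2 * exp (-(2 * a) * r ^ 2) := by
  rw [mul_pow, sq (exp _), ← exp_add]
  ring_nf

section GaussianTestFunction

variable {V : Type*} [NormedAddCommGroup V] [InnerProductSpace ℝ V]

theorem hasGradientAt_const_mul_exp_neg_mul_norm_sub_sq [CompleteSpace V] (C a : ℝ) (x y : V) :
    HasGradientAt (fun y => C * exp (-a * ‖x - y‖ ^ 2))
      ((2 * a * (C * exp (-a * ‖x - y‖ ^ 2))) • (x - y)) y := by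
  rw [hasGradientAt_iff_hasFDerivAt]
  refine (((((hasFDerivAt_id (𝕜 := ℝ) y).const_sub x).norm_sq.const_mul (-a)).exp.const_mul C)
    ).congr_fderiv ?_
  ext z
  simp only [id_eq, neg_mul, map_sub, ContinuousLinearMap.comp_neg, ContinuousLinearMap.comp_id,
    neg_sub, two_smul, smul_add, neg_smul, smul_neg, add_apply,
    neg_apply, smul_apply, sub_apply,
    coe_innerSL_apply, smul_eq_mul, map_smul, InnerProductSpace.toDual_apply_apply]
  ring

theorem norm_gradient_const_mul_exp_neg_mul_norm_sub_sq_sq [CompleteSpace V] (C a : ℝ) (x y : V) :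
    ‖gradient (fun y => C * exp (-a * ‖x - y‖ ^ 2)) y‖ ^ 2
      = 4 * a ^ 2 * C ^ 2 * (‖x - y‖ ^ 2 * exp (-(2 * a) * ‖x - y‖ ^ 2)) := by
  rw [(hasGradientAt_const_mul_exp_neg_mul_norm_sub_sq C a x y).gradient, norm_smul, mul_pow,
    Real.norm_eq_abs, sq_abs, mul_pow, sq_const_mul_exp_neg_mul_sq]
  ring

theorem contDiff_const_mul_exp_neg_mul_norm_sub_sq {n : WithTop ℕ∞} (C a : ℝ) (x : V) :
    ContDiff ℝ n fun y => C * exp (-a * ‖x - y‖ ^ 2) :=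
  contDiff_const.mul (contDiff_const.mul ((contDiff_const.sub contDiff_id).norm_sq ℝ)).exp

variable [FiniteDimensional ℝ V] [MeasurableSpace V] [BorelSpace V]
  (μ : Measure V) [μ.IsAddHaarMeasure] {a : ℝ}

theorem memLp_two_const_mul_exp_neg_mul_norm_sub_sq (C : ℝ) (ha : 0 < a) (x : V) :
    MemLp (fun y => C * exp (-a * ‖x - y‖ ^ 2)) 2 μ := by
  rw [memLp_two_iff_integrable_sq
    (contDiff_const_mul_exp_neg_mul_norm_sub_sq (n := 0) C a x).continuous.aestronglyMeasurable]
  simp_rw [sq_const_mul_exp_neg_mul_sq]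
  simpa using (((integrable_norm_pow_mul_exp_neg_mul_norm_sq μ (by positivity : 0 < 2 * a) 0)
    ).comp_sub_left x).const_mul (C ^ 2)

theorem memLp_two_gradient_const_mul_exp_neg_mul_norm_sub_sq (C : ℝ) (ha : 0 < a) (x : V) :
    MemLp (gradient fun y => C * exp (-a * ‖x - y‖ ^ 2)) 2 μ := by
  have hcont : Continuous (gradient fun y => C * exp (-a * ‖x - y‖ ^ 2)) := by
    rw [funext (hasGradientAt_const_mul_exp_neg_mul_norm_sub_sq C a x · |>.gradient)]
    fun_prop
  rw [memLp_two_iff_integrable_sq_norm hcont.aestronglyMeasurable]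
  simp_rw [norm_gradient_const_mul_exp_neg_mul_norm_sub_sq_sq]
  exact ((integrable_norm_pow_mul_exp_neg_mul_norm_sq μ (by positivity : 0 < 2 * a) 2
    ).comp_sub_left x).const_mul _

theorem integral_norm_gradient_sq_const_mul_exp_neg_mul_norm_sub_sq (C : ℝ) (ha : 0 < a) (x : V) :
    ∫ y, ‖gradient (fun y => C * exp (-a * ‖x - y‖ ^ 2)) y‖ ^ 2 ∂μ
      = a * finrank ℝ V * ∫ y, (C * exp (-a * ‖x - y‖ ^ 2)) ^ 2 ∂μ := by
  simp_rw [norm_gradient_const_mul_exp_neg_mul_norm_sub_sq_sq, sq_const_mul_exp_neg_mul_sq]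
  rw [integral_const_mul, integral_const_mul,
    integral_sub_left_eq_self (fun z => ‖z‖ ^ 2 * exp (-(2 * a) * ‖z‖ ^ 2)) μ x,
    integral_sub_left_eq_self (fun z => exp (-(2 * a) * ‖z‖ ^ 2)) μ x,
    integral_norm_sq_mul_exp_neg_mul_norm_sq μ (by positivity)]
  field_simp
  ring

end GaussianTestFunction

def IsFormBounded (d : ℕ) (b : E d → E d) (β c : ℝ) : Prop :=
  ∀ f : E d → ℝ, ContDiff ℝ 1 f → MemLp f 2 volume →
    MemLp (fun x => gradient f x) 2 volume →
    (∫⁻ x, ENNReal.ofReal (‖b x‖ ^ 2 * f x ^ 2))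
      ≤ ENNReal.ofReal (β * (∫ x, ‖gradient f x‖ ^ 2) + c * ∫ x, f x ^ 2)

def gaussKSqrt (d : ℕ) (t : ℝ) (x : E d) : E d → ℝ :=
  fun y => (4 * π * t) ^ (-(d : ℝ) / 4) * exp (-(8 * t)⁻¹ * ‖x - y‖ ^ 2)

section HeatKernel

variable {d : ℕ} {t : ℝ}

theorem gaussK_one_sub_eq_gaussKSqrt_sq (ht : 0 < t) (x y : E d) :
    gaussK d 1 t (x - y) = gaussKSqrt d t x y ^ 2 := by
  rw [gaussKSqrt, sq_const_mul_exp_neg_mul_sq, ← Real.rpow_natCast,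
    ← Real.rpow_mul (by positivity), gaussK]
  congr 2 <;> push_cast <;> field_simp <;> ring

theorem integral_gaussKSqrt_sq (ht : 0 < t) (x : E d) : ∫ y, gaussKSqrt d t x y ^ 2 = 1 := by
  simp_rw [gaussKSqrt, sq_const_mul_exp_neg_mul_sq]
  rw [integral_const_mul,
    integral_sub_left_eq_self (fun z => exp (-(2 * (8 * t)⁻¹) * ‖z‖ ^ 2)) volume x,
    GaussianFourier.integral_rexp_neg_mul_sq_norm (by positivity), finrank_euclideanSpace_fin,
    ← Real.rpow_natCast, ← Real.rpow_mul (by positivity),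
    show π / (2 * (8 * t)⁻¹) = 4 * π * t by field_simp; ring, ← Real.rpow_add (by positivity),
    show -(d : ℝ) / 4 * (2 : ℕ) + d / 2 = 0 by push_cast; ring, Real.rpow_zero]

theorem integral_norm_gradient_gaussKSqrt_sq (ht : 0 < t) (x : E d) :
    ∫ y, ‖gradient (gaussKSqrt d t x) y‖ ^ 2 = d / (8 * t) := by
  have hmass := integral_gaussKSqrt_sq ht x
  unfold gaussKSqrt at hmass ⊢
  rw [integral_norm_gradient_sq_const_mul_exp_neg_mul_norm_sub_sq volume _ (by positivity),
    hmass, finrank_euclideanSpace_fin]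
  field_simp

theorem heatSem_bsq_le_of_isFormBounded {b : E d → E d} {β c : ℝ}
    (hform : IsFormBounded d b β c) (ht : 0 < t) (x : E d) :
    heatSem d t (bsq d b) x ≤ ENNReal.ofReal (β * (d / (8 * t)) + c) := by
  have hf := hform (gaussKSqrt d t x) (contDiff_const_mul_exp_neg_mul_norm_sub_sq _ _ x)
    (memLp_two_const_mul_exp_neg_mul_norm_sub_sq volume _ (by positivity) x)
    (memLp_two_gradient_const_mul_exp_neg_mul_norm_sub_sq volume _ (by positivity) x)
  rw [integral_norm_gradient_gaussKSqrt_sq ht, integral_gaussKSqrt_sq ht, mul_one] at hf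
  refine le_of_eq_of_le (lintegral_congr fun y => ?_) hf
  rw [bsq, gaussK_one_sub_eq_gaussKSqrt_sq ht, ← ENNReal.ofReal_mul (by positivity), mul_comm]

theorem ENNReal.le_ofReal_sqrt_mul_of_le_ofReal_div {A : ℝ≥0∞} {M t : ℝ}
    (ht : 0 < t) (hA : A ≤ ENNReal.ofReal (M / t)) :
    A ≤ ENNReal.ofReal √M * (A ^ (1 / 2 : ℝ) * ENNReal.ofReal (t ^ (-(1 : ℝ) / 2))) := by
  obtain hM | hM := lt_or_ge M 0
  · rw [ENNReal.ofReal_of_nonpos (div_nonpos_of_nonpos_of_nonneg hM.le ht.le),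
      nonpos_iff_eq_zero] at hA
    simp [hA]
  have hsqrt :
      ENNReal.ofReal (M / t) ^ (1 / 2 : ℝ) = ENNReal.ofReal (√M * t ^ (-(1 : ℝ) / 2)) := by
    rw [ENNReal.ofReal_rpow_of_nonneg (by positivity) (by norm_num), Real.sqrt_eq_rpow,
      div_eq_mul_inv, Real.mul_rpow hM (by positivity), Real.inv_rpow ht.le,
      ← Real.rpow_neg ht.le, neg_div]
  calc A = A ^ (1 / 2 : ℝ) * A ^ (1 / 2 : ℝ) := by
        rw [← ENNReal.rpow_add_of_nonneg _ _ (by norm_num) (by norm_num)]; norm_num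
    _ ≤ ENNReal.ofReal (M / t) ^ (1 / 2 : ℝ) * A ^ (1 / 2 : ℝ) := by gcongr
    _ = _ := by rw [hsqrt, ENNReal.ofReal_mul (by positivity)]; ring

theorem katoNormD_le_of_heatSem_bsq_le {b : E d → E d} {h M : ℝ}
    (hbound : ∀ x, ∀ t ∈ Ioc 0 h, heatSem d t (bsq d b) x ≤ ENNReal.ofReal (M / t)) :
    katoNormD d b h ≤ ENNReal.ofReal √M * nashNorm d b h := by
  refine iSup_le fun x => ?_
  calc ∫⁻ t in Ioc 0 h, heatSem d t (bsq d b) x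
      ≤ ∫⁻ t in Ioc 0 h, ENNReal.ofReal √M *
          (heatSem d t (bsq d b) x ^ (1 / 2 : ℝ) * ENNReal.ofReal (t ^ (-(1 : ℝ) / 2))) :=
        setLIntegral_mono' measurableSet_Ioc fun t ht =>
          ENNReal.le_ofReal_sqrt_mul_of_le_ofReal_div ht.1 (hbound x t ht)
    _ = ENNReal.ofReal √M * ∫⁻ t in Ioc 0 h,
          heatSem d t (bsq d b) x ^ (1 / 2 : ℝ) * ENNReal.ofReal (t ^ (-(1 : ℝ) / 2)) :=
        lintegral_const_mul' _ _ ENNReal.ofReal_ne_top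
    _ ≤ ENNReal.ofReal √M * nashNorm d b h := by
        gcongr
        exact le_iSup (fun x => ∫⁻ t in Ioc 0 h,
          heatSem d t (bsq d b) x ^ (1 / 2 : ℝ) * ENNReal.ofReal (t ^ (-(1 : ℝ) / 2))) x

end HeatKernel

theorem nash_and_formbounded_subset_KatoD_general (d : ℕ) (b : E d → E d)
    (β c : ℝ) (hc : 0 ≤ c)
    (hform : ∀ f : E d → ℝ, ContDiff ℝ 1 f → MemLp f 2 volume →
      MemLp (fun x => gradient f x) 2 volume →
      (∫⁻ x, ENNReal.ofReal (‖b x‖ ^ 2 * f x ^ 2))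
        ≤ ENNReal.ofReal (β * (∫ x, ‖gradient f x‖ ^ 2) + c * ∫ x, f x ^ 2))
    (h : ℝ) (hnash : nashNorm d b h ≠ ⊤) :
    katoNormD d b h ≤ ENNReal.ofReal (Real.sqrt (β * d / 8 + c * h)) * nashNorm d b h ∧
      katoNormD d b h < ⊤ := by
  have hbound : ∀ x, ∀ t ∈ Ioc 0 h,
      heatSem d t (bsq d b) x ≤ ENNReal.ofReal ((β * d / 8 + c * h) / t) := fun x t ht =>
    (heatSem_bsq_le_of_isFormBounded hform ht.1 x).trans <| ENNReal.ofReal_le_ofReal <| by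
      have hdt : (d : ℝ) / (8 * t) * t = d / 8 := by field_simp [ht.1.ne']
      rw [le_div_iff₀ ht.1, add_mul, mul_assoc, hdt]
      linarith [mul_le_mul_of_nonneg_left ht.2 hc]
  have hkato := katoNormD_le_of_heatSem_bsq_le hbound
  exact ⟨hkato, hkato.trans_lt (ENNReal.mul_lt_top ENNReal.ofReal_lt_top hnash.lt_top)⟩

/-- If `b` is form-bounded with respect to `−Δ` and `n_e(b,h) < ∞`
for some `h > 0`, then `κ_d(b,h) ≤ sqrt(βd/8 + ch) · n_e(b,h) < ∞`; in particular `b`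
belongs to the Kato class `K^d`. -/
theorem nash_and_formbounded_subset_KatoD (d : ℕ) (hd : 1 ≤ d)
    (b : E d → E d) (hb : Measurable b)
    (hb2 : LocallyIntegrable (fun x : E d => ‖b x‖ ^ 2) volume)
    (β c : ℝ) (hβ : 0 < β) (hc : 0 ≤ c)
    (hform : ∀ f : E d → ℝ, ContDiff ℝ 1 f → MemLp f 2 volume →
      MemLp (fun x => gradient f x) 2 volume →
      (∫⁻ x, ENNReal.ofReal (‖b x‖ ^ 2 * f x ^ 2))
        ≤ ENNReal.ofReal (β * (∫ x, ‖gradient f x‖ ^ 2) + c * ∫ x, f x ^ 2))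
    (h : ℝ) (hh : 0 < h) (hnash : nashNorm d b h ≠ ⊤) :
    katoNormD d b h ≤ ENNReal.ofReal (Real.sqrt (β * d / 8 + c * h)) * nashNorm d b h ∧
      katoNormD d b h < ⊤ :=
  nash_and_formbounded_subset_KatoD_general d b β c hc hform h hnash
end GaussianMoments
end
end
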